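/- Let Q₁ (n × r) and Q₂ (n × (n−r)) have orthonormal columns with Q₁ᵀQ₂ = 0, and let P be an (n−r) × r real matrix. Define Q̂ = (Q₁ + Q₂P)(I_r + PᵀP)^{−1/2}. Then ‖Q̂ − Q₁‖₂ ≤ 2‖P‖₂. -/

import Mathlib

/-!
Write `Q̂ - Q₁ = Q₂ (P S⁻¹) - Q₁ (1 - S⁻¹)`; `Q₁` and `Q₂` are contractions. Since
`SᵀS = 1 + PᵀP` dominates both `1` and `PᵀP` in the Loewner order, `‖S⁻¹‖ ≤ 1` and
`‖P S⁻¹‖ ≤ 1`, which bounds the first term by `‖P‖`. For the second term,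
`(1 - S⁻¹)(S + 1)S = S² - 1 = PᵀP` gives `1 - S⁻¹ = Pᵀ (P S⁻¹) (S + 1)⁻¹`,
a product of `Pᵀ` with two contractions.
-/

open Matrix

noncomputable def frobNorm {m n : Type*} [Fintype m] [Fintype n] (A : Matrix m n ℝ) : ℝ :=
  Real.sqrt (∑ i, ∑ j, (A i j) ^ 2)

noncomputable def specNorm {m n : Type*} [Fintype m] [Fintype n] [DecidableEq n]
    (A : Matrix m n ℝ) : ℝ :=
  ‖LinearMap.toContinuousLinearMap (Matrix.toEuclideanLin A)‖

noncomputable def lamMax {n : Type*} [Fintype n] (A : Matrix n n ℝ) : ℝ :=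
  sSup {r : ℝ | ∃ v : n → ℝ, v ≠ 0 ∧ A.mulVec v = r • v}

open scoped Matrix.Norms.L2Operator RealInnerProductSpace

namespace Matrix

lemma PosDef.transpose_eq {n : Type*} {S : Matrix n n ℝ} (hS : S.PosDef) : Sᵀ = S :=
  (conjTranspose_eq_transpose_of_trivial S).symm.trans hS.isHermitian

variable {l m n p : Type*} [Fintype l] [Fintype m] [Fintype n] [Fintype p] [DecidableEq n]

lemma l2_opNorm_one_le : ‖(1 : Matrix n n ℝ)‖ ≤ 1 := by
  rw [cstar_norm_def, map_one]
  exact ContinuousLinearMap.norm_id_le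

lemma norm_toEuclideanLin_sq [DecidableEq m] (A : Matrix m n ℝ) (x : EuclideanSpace ℝ n) :
    ‖toEuclideanLin A x‖ ^ 2 = ⟪toEuclideanLin (Aᵀ * A) x, x⟫ := by
  rw [toLpLin_mul_same, LinearMap.comp_apply, ← conjTranspose_eq_transpose_of_trivial,
    toEuclideanLin_conjTranspose_eq_adjoint, LinearMap.adjoint_inner_left,
    real_inner_self_eq_norm_sq]

lemma norm_toEuclideanLin_le_of_posSemidef_sub [DecidableEq m] [DecidableEq p]
    {A : Matrix m n ℝ} {B : Matrix p n ℝ} (h : (Aᵀ * A - Bᵀ * B).PosSemidef)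
    (x : EuclideanSpace ℝ n) : ‖toEuclideanLin B x‖ ≤ ‖toEuclideanLin A x‖ := by
  have h := (isPositive_toEuclideanLin_iff.2 h).inner_nonneg_left x
  rw [map_sub, LinearMap.sub_apply, inner_sub_left, ← norm_toEuclideanLin_sq,
    ← norm_toEuclideanLin_sq, sub_nonneg] at h
  exact (sq_le_sq₀ (norm_nonneg _) (norm_nonneg _)).1 h

lemma l2_opNorm_mul_le_of_posSemidef_sub [DecidableEq l] [DecidableEq m] [DecidableEq p]
    {A : Matrix m n ℝ} {B : Matrix p n ℝ} (h : (Aᵀ * A - Bᵀ * B).PosSemidef)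
    (M : Matrix n l ℝ) : ‖B * M‖ ≤ ‖A * M‖ := by
  refine ContinuousLinearMap.opNorm_le_bound _ (norm_nonneg _) fun x => ?_
  calc ‖toEuclideanLin (B * M) x‖ ≤ ‖toEuclideanLin (A * M) x‖ := by
        simpa only [toLpLin_mul_same, LinearMap.comp_apply] using
          norm_toEuclideanLin_le_of_posSemidef_sub h (toEuclideanLin M x)
    _ ≤ ‖A * M‖ * ‖x‖ :=
        (LinearMap.toContinuousLinearMap (toEuclideanLin (A * M))).le_opNorm x

lemma l2_opNorm_mul_inv_le_one_of_posSemidef_sub [DecidableEq p] {A : Matrix n n ℝ}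
    {B : Matrix p n ℝ} (hA : IsUnit A.det) (h : (Aᵀ * A - Bᵀ * B).PosSemidef) :
    ‖B * A⁻¹‖ ≤ 1 :=
  calc ‖B * A⁻¹‖ ≤ ‖A * A⁻¹‖ := l2_opNorm_mul_le_of_posSemidef_sub h _
    _ = ‖(1 : Matrix n n ℝ)‖ := by rw [mul_nonsing_inv A hA]
    _ ≤ 1 := l2_opNorm_one_le

lemma l2_opNorm_inv_le_one_of_posSemidef_sub {A : Matrix n n ℝ} (hA : IsUnit A.det)
    (h : (Aᵀ * A - 1).PosSemidef) : ‖A⁻¹‖ ≤ 1 := by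
  have h' : (Aᵀ * A - 1ᵀ * 1).PosSemidef := by rwa [transpose_one, Matrix.one_mul]
  simpa only [Matrix.one_mul] using l2_opNorm_mul_inv_le_one_of_posSemidef_sub hA h'

lemma l2_opNorm_le_one_of_transpose_mul_self_eq_one [DecidableEq m] {Q : Matrix m n ℝ}
    (hQ : Qᵀ * Q = 1) : ‖Q‖ ≤ 1 := by
  have h : (1ᵀ * 1 - Qᵀ * Q : Matrix n n ℝ).PosSemidef := by simp [hQ, PosSemidef.zero]
  simpa using l2_opNorm_mul_inv_le_one_of_posSemidef_sub (by simp) h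

lemma l2_opNorm_inv_add_one_le_one {S : Matrix n n ℝ} (hS : S.PosDef) :
    ‖(S + 1)⁻¹‖ ≤ 1 := by
  have hS1 : (S + 1).PosDef := hS.add_posSemidef PosSemidef.one
  refine l2_opNorm_inv_le_one_of_posSemidef_sub ((isUnit_iff_isUnit_det _).1 hS1.isUnit) ?_
  have h : (S + 1)ᵀ * (S + 1) - 1 = Sᴴ * S + (S + S) := by
    rw [hS1.transpose_eq, hS.isHermitian.eq]
    noncomm_ring
  rw [h]
  exact (posSemidef_conjTranspose_mul_self S).add (hS.posSemidef.add hS.posSemidef)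

section SquareRoot

variable {P : Matrix p n ℝ} {S : Matrix n n ℝ}

lemma one_sub_inv_eq_of_mul_self_eq (hS : IsUnit S.det) (hS1 : IsUnit (S + 1).det)
    (hSsq : S * S = 1 + Pᵀ * P) : 1 - S⁻¹ = Pᵀ * (P * S⁻¹ * (S + 1)⁻¹) := by
  have hinv : S⁻¹ * S = 1 := nonsing_inv_mul S hS
  have hmul : (1 - S⁻¹) * ((S + 1) * S) = Pᵀ * P :=
    calc (1 - S⁻¹) * ((S + 1) * S) = S * S + S - S⁻¹ * S * S - S⁻¹ * S := by noncomm_ring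
      _ = Pᵀ * P := by rw [hinv, hSsq]; noncomm_ring
  calc 1 - S⁻¹ = (1 - S⁻¹) * ((S + 1) * S) * ((S + 1) * S)⁻¹ := by
        rw [mul_nonsing_inv_cancel_right _ _ (by rw [det_mul]; exact hS1.mul hS)]
    _ = Pᵀ * (P * S⁻¹ * (S + 1)⁻¹) := by
        rw [hmul, mul_inv_rev]
        simp only [Matrix.mul_assoc]

lemma l2_opNorm_inv_le_one_of_mul_self_eq (hS : S.PosDef) (hSsq : S * S = 1 + Pᵀ * P) :
    ‖S⁻¹‖ ≤ 1 := by
  refine l2_opNorm_inv_le_one_of_posSemidef_sub ((isUnit_iff_isUnit_det _).1 hS.isUnit) ?_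
  rw [hS.transpose_eq, hSsq, add_sub_cancel_left, ← conjTranspose_eq_transpose_of_trivial]
  exact posSemidef_conjTranspose_mul_self P

lemma l2_opNorm_mul_inv_le_one_of_mul_self_eq [DecidableEq p] (hS : S.PosDef)
    (hSsq : S * S = 1 + Pᵀ * P) :
    ‖P * S⁻¹‖ ≤ 1 := by
  refine l2_opNorm_mul_inv_le_one_of_posSemidef_sub ((isUnit_iff_isUnit_det _).1 hS.isUnit) ?_
  rw [hS.transpose_eq, hSsq, add_sub_cancel_right]
  exact PosSemidef.one

lemma l2_opNorm_one_sub_inv_le_of_mul_self_eq [DecidableEq p] (hS : S.PosDef)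
    (hSsq : S * S = 1 + Pᵀ * P) :
    ‖1 - S⁻¹‖ ≤ ‖P‖ := by
  have hS1 : (S + 1).PosDef := hS.add_posSemidef PosSemidef.one
  rw [one_sub_inv_eq_of_mul_self_eq ((isUnit_iff_isUnit_det _).1 hS.isUnit)
    ((isUnit_iff_isUnit_det _).1 hS1.isUnit) hSsq]
  calc ‖Pᵀ * (P * S⁻¹ * (S + 1)⁻¹)‖
        ≤ ‖Pᵀ‖ * (‖P * S⁻¹‖ * ‖(S + 1)⁻¹‖) := by
        grw [l2_opNorm_mul, l2_opNorm_mul]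
    _ ≤ ‖P‖ * (1 * 1) := by
        grw [l2_opNorm_mul_inv_le_one_of_mul_self_eq hS hSsq, l2_opNorm_inv_add_one_le_one hS,
          ← conjTranspose_eq_transpose_of_trivial, l2_opNorm_conjTranspose]
    _ = ‖P‖ := by rw [mul_one, mul_one]

end SquareRoot

end Matrix

lemma specNorm_eq_l2_opNorm {m n : Type*} [Fintype m] [Fintype n] [DecidableEq n]
    (A : Matrix m n ℝ) : specNorm A = ‖A‖ := rfl

theorem spec_diff_le_two_specP_general {n r : ℕ}
    (Q1 : Matrix (Fin n) (Fin r) ℝ) (Q2 : Matrix (Fin n) (Fin (n - r)) ℝ)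
    (h1 : Q1ᵀ * Q1 = 1) (h2 : Q2ᵀ * Q2 = 1)
    (P : Matrix (Fin (n - r)) (Fin r) ℝ)
    (S : Matrix (Fin r) (Fin r) ℝ) (hS : S.PosDef) (hSsq : S * S = 1 + Pᵀ * P) :
    specNorm ((Q1 + Q2 * P) * S⁻¹ - Q1) ≤ 2 * specNorm P := by
  have hdecomp : (Q1 + Q2 * P) * S⁻¹ - Q1 = Q2 * (P * S⁻¹) - Q1 * (1 - S⁻¹) := by
    simp only [Matrix.add_mul, Matrix.mul_sub, Matrix.mul_one, Matrix.mul_assoc]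
    abel
  rw [specNorm_eq_l2_opNorm, specNorm_eq_l2_opNorm, hdecomp]
  calc ‖Q2 * (P * S⁻¹) - Q1 * (1 - S⁻¹)‖
      ≤ ‖Q2‖ * (‖P‖ * ‖S⁻¹‖) + ‖Q1‖ * ‖1 - S⁻¹‖ := by
        grw [norm_sub_le, l2_opNorm_mul, l2_opNorm_mul, l2_opNorm_mul]
    _ ≤ 1 * (‖P‖ * 1) + 1 * ‖P‖ := by
        grw [l2_opNorm_le_one_of_transpose_mul_self_eq_one h1,
          l2_opNorm_le_one_of_transpose_mul_self_eq_one h2,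
          l2_opNorm_inv_le_one_of_mul_self_eq hS hSsq,
          l2_opNorm_one_sub_inv_le_of_mul_self_eq hS hSsq]
    _ = 2 * ‖P‖ := by ring

theorem spec_diff_le_two_specP {n r : ℕ}
    (Q1 : Matrix (Fin n) (Fin r) ℝ) (Q2 : Matrix (Fin n) (Fin (n - r)) ℝ)
    (h1 : Q1ᵀ * Q1 = 1) (h2 : Q2ᵀ * Q2 = 1) (h12 : Q1ᵀ * Q2 = 0)
    (P : Matrix (Fin (n - r)) (Fin r) ℝ)
    (S : Matrix (Fin r) (Fin r) ℝ) (hS : S.PosDef) (hSsq : S * S = 1 + Pᵀ * P) :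
    specNorm ((Q1 + Q2 * P) * S⁻¹ - Q1) ≤ 2 * specNorm P :=
  spec_diff_le_two_specP_general Q1 Q2 h1 h2 P S hS hSsq
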